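/- Let ψ : A⊗B → B⊗A be a weak distributive law between k-algebras A and B with weak inverse φ : B⊗A → A⊗B. Then (ψ∘φ)(b⊗a) = Σᵢ b·bᵢ(a)⊗aᵢ(a) (where ψ(a⊗1_B)=Σᵢ bᵢ(a)⊗aᵢ(a)) coincides with Σⱼ bⱼ(b)⊗aⱼ(b)·a (where ψ(1_A⊗b)=Σⱼ bⱼ(b)⊗aⱼ(b)); consequently ψ∘φ is a B-A bimodule map: (μ_B⊗μ_A)∘(id_B⊗(ψ∘φ)⊗id_A) = (ψ∘φ)∘(μ_B⊗μ_A) as maps B⊗B⊗A⊗A → B⊗A. -/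

import Mathlib

open TensorProduct LinearMap

section WDL

variable (R : Type*) [CommRing R]

section AlgDefs

variable {A B : Type*} [Ring A] [Ring B] [Algebra R A] [Algebra R B]

/-- Weak distributive law axioms, stated pointwise on pure tensors. -/
def IsWeakDistLaw (ψ : A ⊗[R] B →ₗ[R] B ⊗[R] A) : Prop :=
  (∀ (a a' : A) (b : B), ψ ((a * a') ⊗ₜ[R] b) =
      lTensor B (mul' R A) ((TensorProduct.assoc R B A A)
        (rTensor A ψ ((TensorProduct.assoc R A B A).symm (a ⊗ₜ[R] ψ (a' ⊗ₜ[R] b)))))) ∧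
  (∀ (a : A) (b b' : B), ψ (a ⊗ₜ[R] (b * b')) =
      rTensor A (mul' R B) ((TensorProduct.assoc R B B A).symm
        (lTensor B ψ ((TensorProduct.assoc R B A B) (ψ (a ⊗ₜ[R] b) ⊗ₜ[R] b'))))) ∧
  (∀ b : B, ψ ((1 : A) ⊗ₜ[R] b) =
      rTensor A (mul' R B) ((TensorProduct.assoc R B B A).symm
        (b ⊗ₜ[R] ψ ((1 : A) ⊗ₜ[R] (1 : B))))) ∧
  (∀ a : A, ψ (a ⊗ₜ[R] (1 : B)) =
      lTensor B (mul' R A) ((TensorProduct.assoc R B A A)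
        (ψ ((1 : A) ⊗ₜ[R] (1 : B)) ⊗ₜ[R] a)))

/-- (Strict) distributive law axioms, stated pointwise on pure tensors. -/
def IsDistLaw (ψ : A ⊗[R] B →ₗ[R] B ⊗[R] A) : Prop :=
  (∀ (a a' : A) (b : B), ψ ((a * a') ⊗ₜ[R] b) =
      lTensor B (mul' R A) ((TensorProduct.assoc R B A A)
        (rTensor A ψ ((TensorProduct.assoc R A B A).symm (a ⊗ₜ[R] ψ (a' ⊗ₜ[R] b)))))) ∧
  (∀ (a : A) (b b' : B), ψ (a ⊗ₜ[R] (b * b')) =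
      rTensor A (mul' R B) ((TensorProduct.assoc R B B A).symm
        (lTensor B ψ ((TensorProduct.assoc R B A B) (ψ (a ⊗ₜ[R] b) ⊗ₜ[R] b'))))) ∧
  (∀ b : B, ψ ((1 : A) ⊗ₜ[R] b) = b ⊗ₜ[R] (1 : A)) ∧
  (∀ a : A, ψ (a ⊗ₜ[R] (1 : B)) = (1 : B) ⊗ₜ[R] a)

/-- `φ` is a weak inverse of `ψ`. -/
def IsWeakInverse (ψ : A ⊗[R] B →ₗ[R] B ⊗[R] A) (φ : B ⊗[R] A →ₗ[R] A ⊗[R] B) : Prop :=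
  (∀ (a : A) (b : B), ψ (φ (b ⊗ₜ[R] a)) =
      rTensor A (mul' R B) ((TensorProduct.assoc R B B A).symm
        (b ⊗ₜ[R] ψ (a ⊗ₜ[R] (1 : B))))) ∧
  (∀ (a : A) (b : B), φ (ψ (a ⊗ₜ[R] b)) =
      rTensor B (mul' R A) ((TensorProduct.assoc R A A B).symm
        (a ⊗ₜ[R] φ (b ⊗ₜ[R] (1 : A)))))

/-- The weak wreath product multiplication `(μ_B ⊗ μ_A) ∘ (id_B ⊗ ψ ⊗ id_A)`. -/
noncomputable def wreathMul (ψ : A ⊗[R] B →ₗ[R] B ⊗[R] A) :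
    (B ⊗[R] A) ⊗[R] (B ⊗[R] A) →ₗ[R] B ⊗[R] A :=
  TensorProduct.map (mul' R B) (mul' R A)
    ∘ₗ (TensorProduct.assoc R B B (A ⊗[R] A)).symm.toLinearMap
    ∘ₗ lTensor B (TensorProduct.assoc R B A A).toLinearMap
    ∘ₗ lTensor B (rTensor A ψ)
    ∘ₗ lTensor B (TensorProduct.assoc R A B A).symm.toLinearMap
    ∘ₗ (TensorProduct.assoc R B A (B ⊗[R] A)).toLinearMap

end AlgDefs

section CoalgDefs

variable {A B : Type*} [AddCommGroup A] [AddCommGroup B] [Module R A] [Module R B]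

/-- Tensor product comultiplication `(id ⊗ tw ⊗ id) ∘ (dA ⊗ dB)` built from the
comultiplication data `dA`, `dB`. -/
noncomputable def comulD (dA : A →ₗ[R] A ⊗[R] A) (dB : B →ₗ[R] B ⊗[R] B) :
    A ⊗[R] B →ₗ[R] (A ⊗[R] B) ⊗[R] (A ⊗[R] B) :=
  (TensorProduct.tensorTensorTensorComm R A A B B).toLinearMap ∘ₗ TensorProduct.map dA dB

/-- Tensor product counit `ε_A ⊗ ε_B`. -/
noncomputable def counitD (eA : A →ₗ[R] R) (eB : B →ₗ[R] R) : A ⊗[R] B →ₗ[R] R :=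
  (TensorProduct.lid R R).toLinearMap ∘ₗ TensorProduct.map eA eB

/-- The weakly comonoidal conditions for a mutually weak inverse pair `(ψ, φ)`,
with respect to comultiplication/counit data on `A` and `B`. -/
def IsWeaklyComonoidalD (ψ : A ⊗[R] B →ₗ[R] B ⊗[R] A) (φ : B ⊗[R] A →ₗ[R] A ⊗[R] B)
    (dA : A →ₗ[R] A ⊗[R] A) (dB : B →ₗ[R] B ⊗[R] B)
    (eA : A →ₗ[R] R) (eB : B →ₗ[R] R) : Prop :=
  (rTensor (B ⊗[R] A) (ψ ∘ₗ φ) ∘ₗ comulD R dB dA ∘ₗ ψ =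
      TensorProduct.map ψ ψ ∘ₗ comulD R dA dB) ∧
  (lTensor (B ⊗[R] A) (ψ ∘ₗ φ) ∘ₗ comulD R dB dA ∘ₗ ψ =
      TensorProduct.map ψ ψ ∘ₗ comulD R dA dB) ∧
  (rTensor (A ⊗[R] B) (φ ∘ₗ ψ) ∘ₗ comulD R dA dB ∘ₗ φ =
      TensorProduct.map φ φ ∘ₗ comulD R dB dA) ∧
  (lTensor (A ⊗[R] B) (φ ∘ₗ ψ) ∘ₗ comulD R dA dB ∘ₗ φ =
      TensorProduct.map φ φ ∘ₗ comulD R dB dA) ∧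
  (counitD R eB eA ∘ₗ ψ = counitD R eA eB ∘ₗ φ ∘ₗ ψ)

end CoalgDefs

section ComonClass

variable {A B : Type*} [AddCommGroup A] [AddCommGroup B] [Module R A] [Module R B]
  [Coalgebra R A] [Coalgebra R B]

/-- Tensor product comultiplication on `A ⊗ B` for coalgebras `A`, `B`. -/
noncomputable def comulTP : A ⊗[R] B →ₗ[R] (A ⊗[R] B) ⊗[R] (A ⊗[R] B) :=
  comulD R (Coalgebra.comul (R := R) (A := A)) (Coalgebra.comul (R := R) (A := B))

/-- Tensor product counit on `A ⊗ B` for coalgebras `A`, `B`. -/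
noncomputable def counitTP : A ⊗[R] B →ₗ[R] R :=
  counitD R (Coalgebra.counit (R := R) (A := A)) (Coalgebra.counit (R := R) (A := B))

end ComonClass

/-- Weakly comonoidal pair with respect to given coalgebra instances. -/
def IsWeaklyComonoidal {A B : Type*} [Ring A] [Ring B] [Algebra R A] [Algebra R B]
    [Coalgebra R A] [Coalgebra R B]
    (ψ : A ⊗[R] B →ₗ[R] B ⊗[R] A) (φ : B ⊗[R] A →ₗ[R] A ⊗[R] B) : Prop :=
  IsWeaklyComonoidalD R ψ φ (Coalgebra.comul (R := R) (A := A))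
    (Coalgebra.comul (R := R) (A := B)) (Coalgebra.counit (R := R) (A := A))
    (Coalgebra.counit (R := R) (A := B))

end WDL

/-- Data of a (possibly weak) bialgebra structure on a module `M`. -/
structure WBAData (R M : Type*) [CommRing R] [AddCommGroup M] [Module R M] where
  mul : M ⊗[R] M →ₗ[R] M
  one : M
  comul : M →ₗ[R] M ⊗[R] M
  counit : M →ₗ[R] R

namespace WBAData

variable {R M : Type*} [CommRing R] [AddCommGroup M] [Module R M] (d : WBAData R M)

/-- The induced multiplication of `M ⊗ M`. -/
noncomputable def mul2 : (M ⊗[R] M) ⊗[R] (M ⊗[R] M) →ₗ[R] M ⊗[R] M :=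
  TensorProduct.map d.mul d.mul ∘ₗ (TensorProduct.tensorTensorTensorComm R M M M M).toLinearMap

/-- The induced multiplication of `(M ⊗ M) ⊗ M`. -/
noncomputable def mul3 :
    ((M ⊗[R] M) ⊗[R] M) ⊗[R] ((M ⊗[R] M) ⊗[R] M) →ₗ[R] (M ⊗[R] M) ⊗[R] M :=
  TensorProduct.map d.mul2 d.mul ∘ₗ
    (TensorProduct.tensorTensorTensorComm R (M ⊗[R] M) M (M ⊗[R] M) M).toLinearMap

/-- Left multiplication by `a`. -/
noncomputable def lmul (a : M) : M →ₗ[R] M := d.mul ∘ₗ TensorProduct.mk R M M a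

/-- Right multiplication by `c`. -/
noncomputable def rmul (c : M) : M →ₗ[R] M := d.mul ∘ₗ (TensorProduct.mk R M M).flip c

/-- Convolution product of endomorphisms. -/
noncomputable def conv (f g : M →ₗ[R] M) : M →ₗ[R] M :=
  d.mul ∘ₗ TensorProduct.map f g ∘ₗ d.comul

/-- The projection `⊓^L : a ↦ ε(1₁a)1₂`. -/
noncomputable def piL : M →ₗ[R] M :=
  (TensorProduct.lid R M).toLinearMap
    ∘ₗ rTensor M (d.counit ∘ₗ d.mul ∘ₗ (TensorProduct.comm R M M).toLinearMap)
    ∘ₗ (TensorProduct.assoc R M M M).symm.toLinearMap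
    ∘ₗ (TensorProduct.mk R M (M ⊗[R] M)).flip (d.comul d.one)

/-- The projection `⊓^R : a ↦ 1₁ε(a1₂)`. -/
noncomputable def piR : M →ₗ[R] M :=
  (TensorProduct.rid R M).toLinearMap
    ∘ₗ lTensor M (d.counit ∘ₗ d.mul ∘ₗ (TensorProduct.comm R M M).toLinearMap)
    ∘ₗ (TensorProduct.assoc R M M M).toLinearMap
    ∘ₗ TensorProduct.mk R (M ⊗[R] M) M (d.comul d.one)

/-- The axioms of a weak bialgebra on the data `d`. -/
structure IsWeakBialgebra : Prop where
  mul_assoc : d.mul ∘ₗ rTensor M d.mul =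
      d.mul ∘ₗ lTensor M d.mul ∘ₗ (TensorProduct.assoc R M M M).toLinearMap
  one_mul : ∀ x : M, d.mul (d.one ⊗ₜ[R] x) = x
  mul_one : ∀ x : M, d.mul (x ⊗ₜ[R] d.one) = x
  coassoc : (TensorProduct.assoc R M M M).toLinearMap ∘ₗ rTensor M d.comul ∘ₗ d.comul
      = lTensor M d.comul ∘ₗ d.comul
  counit_left : ∀ x : M, (TensorProduct.lid R M) (rTensor M d.counit (d.comul x)) = x
  counit_right : ∀ x : M, (TensorProduct.rid R M) (lTensor M d.counit (d.comul x)) = x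
  comul_mul : d.comul ∘ₗ d.mul = d.mul2 ∘ₗ TensorProduct.map d.comul d.comul
  delta_one_left : d.mul3 ((d.comul d.one ⊗ₜ[R] d.one) ⊗ₜ[R]
      ((TensorProduct.assoc R M M M).symm (d.one ⊗ₜ[R] d.comul d.one)))
      = rTensor M d.comul (d.comul d.one)
  delta_one_right : d.mul3 (((TensorProduct.assoc R M M M).symm
      (d.one ⊗ₜ[R] d.comul d.one)) ⊗ₜ[R] (d.comul d.one ⊗ₜ[R] d.one))
      = rTensor M d.comul (d.comul d.one)
  counit_mul_left : ∀ a b c : M, (TensorProduct.lid R R) (TensorProduct.map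
      (d.counit ∘ₗ d.lmul a) (d.counit ∘ₗ d.rmul c) (d.comul b))
      = d.counit (d.mul (d.mul (a ⊗ₜ[R] b) ⊗ₜ[R] c))
  counit_mul_right : ∀ a b c : M, (TensorProduct.lid R R) (TensorProduct.map
      (d.counit ∘ₗ d.rmul c) (d.counit ∘ₗ d.lmul a) (d.comul b))
      = d.counit (d.mul (d.mul (a ⊗ₜ[R] b) ⊗ₜ[R] c))

/-- The axioms of a (genuine) bialgebra on the data `d`. -/
structure IsBialgebra : Prop where
  mul_assoc : d.mul ∘ₗ rTensor M d.mul =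
      d.mul ∘ₗ lTensor M d.mul ∘ₗ (TensorProduct.assoc R M M M).toLinearMap
  one_mul : ∀ x : M, d.mul (d.one ⊗ₜ[R] x) = x
  mul_one : ∀ x : M, d.mul (x ⊗ₜ[R] d.one) = x
  coassoc : (TensorProduct.assoc R M M M).toLinearMap ∘ₗ rTensor M d.comul ∘ₗ d.comul
      = lTensor M d.comul ∘ₗ d.comul
  counit_left : ∀ x : M, (TensorProduct.lid R M) (rTensor M d.counit (d.comul x)) = x
  counit_right : ∀ x : M, (TensorProduct.rid R M) (lTensor M d.counit (d.comul x)) = x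
  comul_mul : d.comul ∘ₗ d.mul = d.mul2 ∘ₗ TensorProduct.map d.comul d.comul
  comul_one : d.comul d.one = d.one ⊗ₜ[R] d.one
  counit_one : d.counit d.one = 1
  counit_mul : ∀ x y : M, d.counit (d.mul (x ⊗ₜ[R] y)) = d.counit x * d.counit y

/-- `S` is an antipode for the data `d`. -/
def IsAntipode (S : M →ₗ[R] M) : Prop :=
  d.conv LinearMap.id S = d.piL ∧ d.conv S LinearMap.id = d.piR ∧
    d.conv (d.conv S LinearMap.id) S = S

end WBAData

/-- The canonical weak-bialgebra data attached to an algebra-and-coalgebra `H`. -/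
noncomputable def algWBA (R H : Type*) [CommRing R] [Ring H] [Algebra R H] [Coalgebra R H] :
    WBAData R H :=
  { mul := LinearMap.mul' R H
    one := 1
    comul := Coalgebra.comul
    counit := Coalgebra.counit }

/-!
Axioms (c) and (d) say that `ψ (1 ⊗ b) = b • ψ (1 ⊗ 1)` and `ψ (a ⊗ 1) = ψ (1 ⊗ 1) • a` for the
left `B`-action and right `A`-action on `B ⊗ A`, so the weak inverse axiom gives
`ψ (φ (b ⊗ a)) = b • ψ (1 ⊗ 1) • a`. Both claims follow because the two actions commute and are
associative.
-/

section TensorMul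

variable {R A M : Type*} [CommSemiring R] [NonUnitalNonAssocSemiring A] [Module R A]
  [SMulCommClass R A A] [IsScalarTower R A A] [AddCommMonoid M] [Module R M]

theorem rTensor_mul'_assoc_symm_tmul (a : A) (x : A ⊗[R] M) :
    rTensor M (mul' R A) ((TensorProduct.assoc R A A M).symm (a ⊗ₜ[R] x)) =
      rTensor M (mulLeft R a) x := by
  induction x using TensorProduct.induction_on with
  | zero => simp only [tmul_zero, map_zero]
  | tmul a' m => simp [mul'_apply]
  | add x y hx hy => simp only [tmul_add, map_add, hx, hy]

theorem lTensor_mul'_assoc_tmul (x : M ⊗[R] A) (a : A) :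
    lTensor M (mul' R A) (TensorProduct.assoc R M A A (x ⊗ₜ[R] a)) =
      lTensor M (mulRight R a) x := by
  induction x using TensorProduct.induction_on with
  | zero => simp only [zero_tmul, map_zero]
  | tmul m a' => simp [mul'_apply]
  | add x y hx hy => simp only [add_tmul, map_add, hx, hy]

end TensorMul

section WeakInverse

variable {R A B : Type*} [CommRing R] [Ring A] [Ring B] [Algebra R A] [Algebra R B]

namespace IsWeakDistLaw

variable {ψ : A ⊗[R] B →ₗ[R] B ⊗[R] A}

theorem apply_one_tmul (hψ : IsWeakDistLaw R ψ) (b : B) :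
    ψ ((1 : A) ⊗ₜ[R] b) = rTensor A (mulLeft R b) (ψ ((1 : A) ⊗ₜ[R] (1 : B))) := by
  rw [hψ.2.2.1, rTensor_mul'_assoc_symm_tmul]

theorem apply_tmul_one (hψ : IsWeakDistLaw R ψ) (a : A) :
    ψ (a ⊗ₜ[R] (1 : B)) = lTensor B (mulRight R a) (ψ ((1 : A) ⊗ₜ[R] (1 : B))) := by
  rw [hψ.2.2.2, lTensor_mul'_assoc_tmul]

end IsWeakDistLaw

theorem IsWeakInverse.apply_apply_tmul {ψ : A ⊗[R] B →ₗ[R] B ⊗[R] A}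
    {φ : B ⊗[R] A →ₗ[R] A ⊗[R] B} (hinv : IsWeakInverse R ψ φ) (hψ : IsWeakDistLaw R ψ)
    (b : B) (a : A) :
    ψ (φ (b ⊗ₜ[R] a)) = TensorProduct.map (mulLeft R b) (mulRight R a)
      (ψ ((1 : A) ⊗ₜ[R] (1 : B))) := by
  rw [hinv.1, rTensor_mul'_assoc_symm_tmul, hψ.apply_tmul_one, ← comp_apply,
    rTensor_comp_lTensor]

end WeakInverse

theorem weak_inverse_bimodule_map_general
    {R A B : Type*} [CommRing R] [Ring A] [Ring B] [Algebra R A] [Algebra R B]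
    (ψ : A ⊗[R] B →ₗ[R] B ⊗[R] A) (φ : B ⊗[R] A →ₗ[R] A ⊗[R] B)
    (hψ : IsWeakDistLaw R ψ) (hinv : IsWeakInverse R ψ φ) :
    -- the two expressions for `(ψ ∘ φ)(b ⊗ a)` coincide
    (∀ (a : A) (b : B),
      ψ (φ (b ⊗ₜ[R] a)) =
        rTensor A (mul' R B) ((TensorProduct.assoc R B B A).symm
          (b ⊗ₜ[R] ψ (a ⊗ₜ[R] (1 : B)))) ∧
      ψ (φ (b ⊗ₜ[R] a)) =
        lTensor B (mul' R A) ((TensorProduct.assoc R B A A)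
          (ψ ((1 : A) ⊗ₜ[R] b) ⊗ₜ[R] a))) ∧
    -- `ψ ∘ φ` is a `B`-`A` bimodule map
    (∀ (b b' : B) (a a' : A),
      TensorProduct.map (LinearMap.mulLeft R b) (LinearMap.mulRight R a')
          (ψ (φ (b' ⊗ₜ[R] a))) =
        ψ (φ ((b * b') ⊗ₜ[R] (a * a')))) := by
  refine ⟨fun a b => ⟨hinv.1 a b, ?_⟩, fun b b' a a' => ?_⟩
  · rw [lTensor_mul'_assoc_tmul, hψ.apply_one_tmul b, hinv.apply_apply_tmul hψ,
      ← lTensor_comp_rTensor, comp_apply]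
  · rw [hinv.apply_apply_tmul hψ, hinv.apply_apply_tmul hψ, map_map, mulLeft_mul, mulRight_mul]

/-- the two expressions for `ψ ∘ φ`, and the `B`-`A` bimodule property. -/
theorem weak_inverse_bimodule_map
    {R A B : Type*} [CommRing R] [Ring A] [Ring B] [Algebra R A] [Algebra R B]
    (ψ : A ⊗[R] B →ₗ[R] B ⊗[R] A) (φ : B ⊗[R] A →ₗ[R] A ⊗[R] B)
    (hψ : IsWeakDistLaw R ψ) (hφ : IsWeakDistLaw R φ) (hinv : IsWeakInverse R ψ φ) :
    -- the two expressions for `(ψ ∘ φ)(b ⊗ a)` coincide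
    (∀ (a : A) (b : B),
      ψ (φ (b ⊗ₜ[R] a)) =
        rTensor A (mul' R B) ((TensorProduct.assoc R B B A).symm
          (b ⊗ₜ[R] ψ (a ⊗ₜ[R] (1 : B)))) ∧
      ψ (φ (b ⊗ₜ[R] a)) =
        lTensor B (mul' R A) ((TensorProduct.assoc R B A A)
          (ψ ((1 : A) ⊗ₜ[R] b) ⊗ₜ[R] a))) ∧
    -- `ψ ∘ φ` is a `B`-`A` bimodule map
    (∀ (b b' : B) (a a' : A),
      TensorProduct.map (LinearMap.mulLeft R b) (LinearMap.mulRight R a')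
          (ψ (φ (b' ⊗ₜ[R] a))) =
        ψ (φ ((b * b') ⊗ₜ[R] (a * a')))) :=
  weak_inverse_bimodule_map_general ψ φ hψ hinv
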